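/- arXiv:2210.06630 — 4 statements merged into one kernel-verified Lean document; each statement's English description precedes it below -/
import Mathlib

section
/- Let u_{t+1} = Π_Ω[(1−γ)u_t + γ ĝ_t] where Π_Ω is projection onto a closed convex set Ω containing g(w_t) and g(w_{t+1}), ĝ_t is an unbiased estimator of g(w_t) with variance at most V, and g is C_g-Lipschitz. Then for γ ∈ (0,1], E‖u_{t+1} − g(w_t)‖² ≤ (1−γ)‖u_t − g(w_{t−1})‖² + γ²V + γ^{−1}C_g²‖w_t − w_{t−1}‖². -/
open MeasureTheory

set_option maxHeartbeats 1000000 in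
/-- One-step error recursion for the moving-average estimator: if
`u_{t+1} = Π_Ω ((1−γ) • u_t + γ • ĝ)` where `Π_Ω` is a (nonexpansive) projection onto a
closed convex set containing `g w_t` (so in particular it fixes `g w_t`), `ĝ` is an
unbiased estimator of `g w_t` with variance at most `V`, and `g` is `C_g`-Lipschitz, then
`E‖u_{t+1} − g w_t‖² ≤ (1−γ)‖u_t − g w_{t−1}‖² + γ² V + γ⁻¹ C_g² ‖w_t − w_{t−1}‖²`
for `γ ∈ (0,1]`. -/
theorem moving_average_error_recursion
    {d s : ℕ} {Ω : Type*} [MeasureSpace Ω] (μ : Measure Ω) [IsProbabilityMeasure μ]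
    (g : EuclideanSpace ℝ (Fin d) → EuclideanSpace ℝ (Fin s))
    (Proj : EuclideanSpace ℝ (Fin s) → EuclideanSpace ℝ (Fin s))
    (ghat : Ω → EuclideanSpace ℝ (Fin s))
    (ut : EuclideanSpace ℝ (Fin s))
    (wt wtm : EuclideanSpace ℝ (Fin d))
    (γ V Cg : ℝ) (hγ0 : 0 < γ) (hγ1 : γ ≤ 1) (hV : 0 ≤ V) (hCg : 0 ≤ Cg)
    (hProj : LipschitzWith 1 Proj)
    (hfix : Proj (g wt) = g wt)
    (hint : Integrable ghat μ)
    (hint2 : Integrable (fun ω => ‖ghat ω - g wt‖ ^ 2) μ)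
    (hunbiased : ∫ ω, ghat ω ∂μ = g wt)
    (hvar : ∫ ω, ‖ghat ω - g wt‖ ^ 2 ∂μ ≤ V)
    (hLip : ∀ x y, ‖g x - g y‖ ≤ Cg * ‖x - y‖) :
    ∫ ω, ‖Proj ((1 - γ) • ut + γ • ghat ω) - g wt‖ ^ 2 ∂μ ≤
      (1 - γ) * ‖ut - g wtm‖ ^ 2 + γ ^ 2 * V + γ⁻¹ * Cg ^ 2 * ‖wt - wtm‖ ^ 2 := by
  set a : EuclideanSpace ℝ (Fin s) := (1 - γ) • (ut - g wt) with ha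
  have hb : Integrable (fun ω => ghat ω - g wt) μ := hint.sub (integrable_const _)
  -- pointwise bound and expansion
  have hpt : ∀ ω, ‖Proj ((1 - γ) • ut + γ • ghat ω) - g wt‖ ^ 2 ≤
      ‖a‖ ^ 2 + 2 * inner ℝ a (γ • (ghat ω - g wt)) + ‖γ • (ghat ω - g wt)‖ ^ 2 := by
    intro ω
    have h1 : ‖Proj ((1 - γ) • ut + γ • ghat ω) - g wt‖ ≤
        ‖a + γ • (ghat ω - g wt)‖ := by
      have := hProj.dist_le_mul ((1 - γ) • ut + γ • ghat ω) (g wt)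
      rw [hfix] at this
      simp only [NNReal.coe_one, one_mul, dist_eq_norm] at this
      refine this.trans (le_of_eq ?_)
      congr 1
      rw [ha]
      module
    calc ‖Proj ((1 - γ) • ut + γ • ghat ω) - g wt‖ ^ 2
        ≤ ‖a + γ • (ghat ω - g wt)‖ ^ 2 := by
          exact pow_le_pow_left₀ (norm_nonneg _) h1 2
      _ = ‖a‖ ^ 2 + 2 * inner ℝ a (γ • (ghat ω - g wt)) + ‖γ • (ghat ω - g wt)‖ ^ 2 :=
          norm_add_sq_real a _
  -- integrability of the RHS
  have hi2 : Integrable (fun ω => 2 * (inner ℝ a (γ • (ghat ω - g wt)) : ℝ)) μ := by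
    exact ((hb.smul γ).const_inner a).const_mul 2
  have heq3 : (fun ω => ‖γ • (ghat ω - g wt)‖ ^ 2)
      = fun ω => γ ^ 2 * ‖ghat ω - g wt‖ ^ 2 := by
    funext ω
    rw [norm_smul]
    simp [mul_pow, sq_abs]
  have hi3 : Integrable (fun ω => ‖γ • (ghat ω - g wt)‖ ^ 2) μ := by
    rw [heq3]; exact hint2.const_mul _
  have hiRHS : Integrable (fun ω => ‖a‖ ^ 2 + 2 * (inner ℝ a (γ • (ghat ω - g wt)) : ℝ)
      + ‖γ • (ghat ω - g wt)‖ ^ 2) μ := ((integrable_const _).add hi2).add hi3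
  have hiLHS : Integrable (fun ω => ‖Proj ((1 - γ) • ut + γ • ghat ω) - g wt‖ ^ 2) μ := by
    refine Integrable.mono' hiRHS ?_ ?_
    · have hc : Continuous (fun x : EuclideanSpace ℝ (Fin s) =>
          ‖Proj ((1 - γ) • ut + γ • x) - g wt‖ ^ 2) := by
        apply Continuous.pow
        apply Continuous.norm
        exact (hProj.continuous.comp
          (continuous_const.add (continuous_const_smul γ))).sub continuous_const
      exact hc.comp_aestronglyMeasurable hint.aestronglyMeasurable
    · filter_upwards with ω
      rw [Real.norm_eq_abs, abs_of_nonneg (by positivity)]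
      exact hpt ω
  -- integrate
  have hzero : ∫ ω, (ghat ω - g wt) ∂μ = 0 := by
    rw [integral_sub hint (integrable_const _), hunbiased, integral_const]
    simp
  have hcross : ∫ ω, 2 * (inner ℝ a (γ • (ghat ω - g wt)) : ℝ) ∂μ = 0 := by
    rw [integral_const_mul]
    have h := integral_inner (𝕜 := ℝ) (μ := μ) (hb.smul γ) a
    simp only [Pi.smul_apply] at h
    rw [h, integral_smul, hzero, smul_zero, inner_zero_right, mul_zero]
  have hmain : ∫ ω, ‖Proj ((1 - γ) • ut + γ • ghat ω) - g wt‖ ^ 2 ∂μ ≤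
      ‖a‖ ^ 2 + γ ^ 2 * V := by
    calc ∫ ω, ‖Proj ((1 - γ) • ut + γ • ghat ω) - g wt‖ ^ 2 ∂μ
        ≤ ∫ ω, (‖a‖ ^ 2 + 2 * (inner ℝ a (γ • (ghat ω - g wt)) : ℝ)
            + ‖γ • (ghat ω - g wt)‖ ^ 2) ∂μ :=
          integral_mono hiLHS hiRHS hpt
      _ = ‖a‖ ^ 2 + γ ^ 2 * ∫ ω, ‖ghat ω - g wt‖ ^ 2 ∂μ := by
          have hi12 : Integrable
              (fun ω => ‖a‖ ^ 2 + 2 * (inner ℝ a (γ • (ghat ω - g wt)) : ℝ)) μ :=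
            (integrable_const (‖a‖ ^ 2)).add hi2
          rw [integral_add hi12 hi3,
            integral_add (integrable_const (‖a‖ ^ 2)) hi2, integral_const, hcross, heq3,
            integral_const_mul]
          simp
      _ ≤ ‖a‖ ^ 2 + γ ^ 2 * V := by nlinarith [sq_nonneg γ]
  refine hmain.trans ?_
  -- deterministic part
  have hna : ‖a‖ = (1 - γ) * ‖ut - g wt‖ := by
    rw [ha, norm_smul, Real.norm_eq_abs, abs_of_nonneg (by linarith)]
  have hX : ‖ut - g wt‖ ≤ ‖ut - g wtm‖ + Cg * ‖wt - wtm‖ := by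
    calc ‖ut - g wt‖ = ‖(ut - g wtm) + (g wtm - g wt)‖ := by rw [sub_add_sub_cancel]
      _ ≤ ‖ut - g wtm‖ + ‖g wtm - g wt‖ := norm_add_le _ _
      _ ≤ ‖ut - g wtm‖ + Cg * ‖wt - wtm‖ := by
          have := hLip wtm wt
          rw [norm_sub_rev wtm wt] at this
          linarith
  set X := ‖ut - g wt‖ with hXdef
  set A := ‖ut - g wtm‖ with hAdef
  set W := ‖wt - wtm‖ with hWdef
  have hX2 : X ^ 2 ≤ (A + Cg * W) ^ 2 :=
    pow_le_pow_left₀ (norm_nonneg _) hX 2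
  have hkey : γ * ((1 - γ) ^ 2 * X ^ 2) ≤ γ * ((1 - γ) * A ^ 2) + Cg ^ 2 * W ^ 2 := by
    nlinarith [mul_le_mul_of_nonneg_left hX2 (mul_nonneg hγ0.le (sq_nonneg (1 - γ))),
      sq_nonneg ((1 - γ) * (γ * A - Cg * W)),
      mul_nonneg (mul_nonneg (sub_nonneg.mpr hγ1) (sq_nonneg γ)) (sq_nonneg A),
      mul_nonneg hγ0.le (sq_nonneg (Cg * W)),
      mul_nonneg (mul_nonneg (sq_nonneg γ) (sub_nonneg.mpr hγ1)) (sq_nonneg (Cg * W)),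
      hγ0.le]
  have hkey2 : (1 - γ) ^ 2 * X ^ 2 ≤ (1 - γ) * A ^ 2 + γ⁻¹ * Cg ^ 2 * W ^ 2 := by
    have h := mul_le_mul_of_nonneg_left hkey (inv_nonneg.mpr hγ0.le)
    rw [mul_add] at h
    refine le_trans (le_of_eq ?_) (h.trans (le_of_eq ?_)) <;> field_simp <;> ring
  rw [hna]
  nlinarith [hkey2]
end

section
/- Suppose h_{t+1} = η₁ h_t + (1−η₁)G_t with h_0 = 0, v̂ satisfies v̂_{t+1} ≥ η₂ v̂_t + (1−η₂)G_t² coordinatewise with v̂_0 ≥ 0, and η₁² < η₂ < 1 with τ := η₁²/η₂. Then for every coordinate l, |h^l_{t+1}|² ≤ (1−η₂)^{−1}(1−τ)^{−1} v̂^l_{t+1}. -/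
/-!
With `C := (1 - η₂)⁻¹ (1 - τ)⁻¹`, the invariant `h_t² ≤ C v̂_t` propagates along the recursions:
the one-step estimate `(η₁ a + (1 - η₁) b)² ≤ η₂ a² + (1 - τ)⁻¹ b²` (a weighted Cauchy–Schwarz
inequality) gives `h_{t+1}² ≤ η₂ C v̂_t + C (1 - η₂) G_t² ≤ C v̂_{t+1}`.
-/

/-- Weighted Cauchy–Schwarz with weights `α² / β` and `1 - α² / β`. -/
theorem sq_add_le_mul_sq_add_inv_mul_sq {α β a c : ℝ} (h : α ^ 2 < β) :
    (α * a + c) ^ 2 ≤ β * a ^ 2 + (1 - α ^ 2 / β)⁻¹ * c ^ 2 := by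
  have hβ : 0 < β := (sq_nonneg α).trans_lt h
  have hD : 0 < β - α ^ 2 := sub_pos.2 h
  rw [one_sub_div hβ.ne', inv_div, ← sub_nonneg]
  have scaled_diff_eq_sq : (β - α ^ 2) * (β * a ^ 2 + β / (β - α ^ 2) * c ^ 2 - (α * a + c) ^ 2)
      = ((β - α ^ 2) * a - α * c) ^ 2 := by
    field_simp
    ring
  exact nonneg_of_mul_nonneg_right (scaled_diff_eq_sq ▸ sq_nonneg _) hD

theorem momentum_step_sq_le {η₁ η₂ a b : ℝ} (hη₁0 : 0 ≤ η₁) (hη : η₁ ^ 2 < η₂) (hη₂ : η₂ < 1) :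
    (η₁ * a + (1 - η₁) * b) ^ 2 ≤ η₂ * a ^ 2 + (1 - η₁ ^ 2 / η₂)⁻¹ * b ^ 2 := by
  have hη₁ : η₁ ≤ 1 := by nlinarith
  have hτ : 0 ≤ (1 - η₁ ^ 2 / η₂)⁻¹ :=
    inv_nonneg.2 (sub_nonneg.2 ((div_le_one ((sq_nonneg η₁).trans_lt hη)).2 hη.le))
  have hb : ((1 - η₁) * b) ^ 2 ≤ b ^ 2 := by
    rw [mul_pow]
    exact mul_le_of_le_one_left (sq_nonneg b) (pow_le_one₀ (by linarith) (by linarith))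
  calc (η₁ * a + (1 - η₁) * b) ^ 2
      ≤ η₂ * a ^ 2 + (1 - η₁ ^ 2 / η₂)⁻¹ * ((1 - η₁) * b) ^ 2 :=
        sq_add_le_mul_sq_add_inv_mul_sq hη
    _ ≤ η₂ * a ^ 2 + (1 - η₁ ^ 2 / η₂)⁻¹ * b ^ 2 := by gcongr

theorem momentum_sq_le_of_second_moment {η₁ η₂ : ℝ} (hη₁0 : 0 ≤ η₁) (hη : η₁ ^ 2 < η₂)
    (hη₂ : η₂ < 1) {h G v : ℕ → ℝ} (h0 : h 0 = 0)
    (hrec : ∀ t, h (t + 1) = η₁ * h t + (1 - η₁) * G t) (hv0 : 0 ≤ v 0)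
    (hvrec : ∀ t, η₂ * v t + (1 - η₂) * G t ^ 2 ≤ v (t + 1)) (t : ℕ) :
    h t ^ 2 ≤ (1 - η₂)⁻¹ * (1 - η₁ ^ 2 / η₂)⁻¹ * v t := by
  set C := (1 - η₂)⁻¹ * (1 - η₁ ^ 2 / η₂)⁻¹
  have hη₂0 : 0 < η₂ := (sq_nonneg η₁).trans_lt hη
  have hC : 0 ≤ C := mul_nonneg (inv_nonneg.2 (by linarith))
    (inv_nonneg.2 (sub_nonneg.2 ((div_le_one hη₂0).2 hη.le)))
  have hC_mul : C * (1 - η₂) = (1 - η₁ ^ 2 / η₂)⁻¹ := by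
    rw [mul_right_comm, inv_mul_cancel₀ (by linarith), one_mul]
  induction t with
  | zero => simpa [h0] using mul_nonneg hC hv0
  | succ t ih =>
    calc h (t + 1) ^ 2
        ≤ η₂ * h t ^ 2 + (1 - η₁ ^ 2 / η₂)⁻¹ * G t ^ 2 := hrec t ▸ momentum_step_sq_le hη₁0 hη hη₂
      _ ≤ η₂ * (C * v t) + C * (1 - η₂) * G t ^ 2 := by rw [hC_mul]; gcongr
      _ = C * (η₂ * v t + (1 - η₂) * G t ^ 2) := by ring
      _ ≤ C * v (t + 1) := mul_le_mul_of_nonneg_left (hvrec t) hC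

/-- Suppose `h_{t+1} = η₁ h_t + (1−η₁) G_t` with `h_0 = 0`, `v̂` satisfies
`v̂_{t+1} ≥ η₂ v̂_t + (1−η₂) G_t²` coordinatewise with `v̂_0 ≥ 0`, and `η₁² < η₂ < 1`
with `τ := η₁²/η₂`. Then for every coordinate `l`,
`|h^l_{t+1}|² ≤ (1−η₂)⁻¹ (1−τ)⁻¹ v̂^l_{t+1}`. -/
theorem momentum_second_moment_bound (d : ℕ) (η₁ η₂ : ℝ)
    (hη₁0 : 0 ≤ η₁) (hη : η₁ ^ 2 < η₂) (hη₂ : η₂ < 1)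
    (h G vhat : ℕ → Fin d → ℝ)
    (h0 : h 0 = 0)
    (hrec : ∀ t l, h (t + 1) l = η₁ * h t l + (1 - η₁) * G t l)
    (hv0 : ∀ l, 0 ≤ vhat 0 l)
    (hvrec : ∀ t l, η₂ * vhat t l + (1 - η₂) * (G t l) ^ 2 ≤ vhat (t + 1) l) :
    ∀ t l, (h (t + 1) l) ^ 2 ≤
      (1 - η₂)⁻¹ * (1 - η₁ ^ 2 / η₂)⁻¹ * vhat (t + 1) l := fun t l =>
  momentum_sq_le_of_second_moment (h := (h · l)) hη₁0 hη hη₂ (congrFun h0 l) (hrec · l) (hv0 l)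
    (hvrec · l) (t + 1)
end

section
/- If R : ℝ^d → ℝ is L-smooth and w_{t+1} = w_t − α G_t where G_t is a possibly biased stochastic gradient satisfying E_t[G_t] = ∇g_t(w_t)ᵀ∇f(u_t) with ‖∇g‖ ≤ C_l and ∇f L_f-Lipschitz, then E_t[R(w_{t+1})] ≤ R(w_t) − (α/2)‖∇R(w_t)‖² + (α C_l² L_f²/2) E_t[‖g_t(w_t) − u_t‖²] + α² L C²/2, where C bounds ‖G_t‖. -/
open MeasureTheory

/-!
Smoothness bounds `R (w - α G)` by `R w - α ⟪∇R w, G⟫ + α² L ‖G‖² / 2`; taking expectations,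
`-⟪∇R w, E G⟫ ≤ -‖∇R w‖²/2 + ‖E G - ∇R w‖²/2` isolates the bias of `G`. Since the unbiased
direction `Jᵀ ∇f(gval)` has mean `∇R w`, the bias is the mean of `Jᵀ (∇f(u) - ∇f(gval))`, whose squared
norm is at most `Cl² Lf² E‖gval - u‖²` by Jensen's inequality for `‖·‖²`.
-/

section InnerProductSpace

variable {E : Type*} [NormedAddCommGroup E] [InnerProductSpace ℝ E]

theorem sq_norm_sub_sq_norm_sub_le_two_mul_inner (a b : E) :
    ‖a‖ ^ 2 - ‖b - a‖ ^ 2 ≤ 2 * inner ℝ a b := by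
  have h := norm_sub_sq_real b a
  rw [real_inner_comm] at h
  linarith [sq_nonneg ‖b‖]

theorem apply_sub_smul_le_of_smooth {R : E → ℝ} {gR : E → E} {L : ℝ}
    (hsmooth : ∀ x y, R y ≤ R x + inner ℝ (gR x) (y - x) + L / 2 * ‖y - x‖ ^ 2)
    (w g : E) (α : ℝ) :
    R (w - α • g) ≤ R w - α * inner ℝ (gR w) g + α ^ 2 * L / 2 * ‖g‖ ^ 2 := by
  have h := hsmooth w (w - α • g)
  rw [sub_sub_cancel_left, inner_neg_right, inner_smul_right, norm_neg, norm_smul,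
    mul_pow, Real.norm_eq_abs, sq_abs] at h
  linarith

theorem norm_adjoint_apply_sub_le {F : Type*} [NormedAddCommGroup F] [InnerProductSpace ℝ F]
    [CompleteSpace E] [CompleteSpace F] (A : E →L[ℝ] F) (x y : F) :
    ‖ContinuousLinearMap.adjoint A x - ContinuousLinearMap.adjoint A y‖ ≤ ‖A‖ * ‖x - y‖ := by
  rw [← map_sub, ← ContinuousLinearMap.adjoint.norm_map A]
  exact ContinuousLinearMap.le_opNorm _ _

variable [CompleteSpace E] {Ω : Type*} [MeasurableSpace Ω] {μ : Measure Ω} [IsProbabilityMeasure μ]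

theorem sq_norm_integral_le_integral_of_sq_norm_le {f : Ω → E} {g : Ω → ℝ}
    (hf : Integrable f μ) (hg : Integrable g μ) (hfg : ∀ ω, ‖f ω‖ ^ 2 ≤ g ω) :
    ‖∫ ω, f ω ∂μ‖ ^ 2 ≤ ∫ ω, g ω ∂μ := by
  have hf2 : Integrable (fun ω => ‖f ω‖ ^ 2) μ :=
    hg.mono' (hf.norm.aestronglyMeasurable.pow 2) <| .of_forall fun ω => by
      rw [Real.norm_eq_abs, abs_of_nonneg (by positivity)]
      exact hfg ω
  calc ‖∫ ω, f ω ∂μ‖ ^ 2 ≤ ∫ ω, ‖f ω‖ ^ 2 ∂μ :=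
        (convexOn_univ_norm.pow (fun _ _ => norm_nonneg _) 2).map_integral_le
          (continuous_norm.pow 2).continuousOn isClosed_univ (.of_forall fun _ => trivial) hf hf2
    _ ≤ ∫ ω, g ω ∂μ := integral_mono hf2 hg hfg

theorem integral_apply_sub_smul_le_of_smooth {R : E → ℝ} {gR : E → E} {L α C : ℝ}
    (hsmooth : ∀ x y, R y ≤ R x + inner ℝ (gR x) (y - x) + L / 2 * ‖y - x‖ ^ 2)
    (hα : 0 ≤ α) (hL : 0 ≤ L) (w : E) {G : Ω → E} (hG : ∀ ω, ‖G ω‖ ≤ C)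
    (hintG : Integrable G μ) (hintR : Integrable (fun ω => R (w - α • G ω)) μ) :
    ∫ ω, R (w - α • G ω) ∂μ ≤
      R w - α / 2 * ‖gR w‖ ^ 2 + α / 2 * ‖(∫ ω, G ω ∂μ) - gR w‖ ^ 2 + α ^ 2 * L * C ^ 2 / 2 := by
  have hint : Integrable (fun ω => α * inner ℝ (gR w) (G ω)) μ :=
    (hintG.const_inner (gR w)).const_mul α
  have hint' : Integrable (fun ω => R w - α * inner ℝ (gR w) (G ω)) μ :=
    (integrable_const _).sub hint
  have hstep : ∀ ω, R (w - α • G ω) ≤ R w - α * inner ℝ (gR w) (G ω) + α ^ 2 * L * C ^ 2 / 2 :=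
    fun ω => by
      have hG2 : ‖G ω‖ ^ 2 ≤ C ^ 2 := pow_le_pow_left₀ (norm_nonneg _) (hG ω) 2
      have := apply_sub_smul_le_of_smooth hsmooth w (G ω) α
      linarith [mul_le_mul_of_nonneg_left hG2 (by positivity : 0 ≤ α ^ 2 * L / 2)]
  have hinner := sq_norm_sub_sq_norm_sub_le_two_mul_inner (gR w) (∫ ω, G ω ∂μ)
  calc ∫ ω, R (w - α • G ω) ∂μ
      ≤ ∫ ω, (R w - α * inner ℝ (gR w) (G ω) + α ^ 2 * L * C ^ 2 / 2) ∂μ :=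
        integral_mono hintR (hint'.add (integrable_const _)) hstep
    _ = R w - α * inner ℝ (gR w) (∫ ω, G ω ∂μ) + α ^ 2 * L * C ^ 2 / 2 := by
        rw [integral_add hint' (integrable_const _),
          integral_sub (integrable_const _) hint, integral_const_mul, integral_inner hintG]
        simp
    _ ≤ _ := by linarith [mul_le_mul_of_nonneg_left hinner hα]

end InnerProductSpace

theorem biased_sgd_descent_lemma_general
    {d m : ℕ} {Ω : Type*} [MeasureSpace Ω] (μ : Measure Ω) [IsProbabilityMeasure μ]
    (R : EuclideanSpace ℝ (Fin d) → ℝ)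
    (gR : EuclideanSpace ℝ (Fin d) → EuclideanSpace ℝ (Fin d))
    (gradf : EuclideanSpace ℝ (Fin m) → EuclideanSpace ℝ (Fin m))
    (J : Ω → (EuclideanSpace ℝ (Fin d) →L[ℝ] EuclideanSpace ℝ (Fin m)))
    (gval u : Ω → EuclideanSpace ℝ (Fin m))
    (w : EuclideanSpace ℝ (Fin d))
    (α L Cl Lf C : ℝ)
    (hα : 0 < α) (hL : 0 ≤ L) (hCl : 0 ≤ Cl)
    (hsmooth : ∀ x y, R y ≤ R x + (inner ℝ (gR x) (y - x) : ℝ) + L / 2 * ‖y - x‖ ^ 2)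
    (hJ : ∀ ω, ‖J ω‖ ≤ Cl)
    (hgradf : ∀ x y, ‖gradf x - gradf y‖ ≤ Lf * ‖x - y‖)
    (hGbound : ∀ ω, ‖ContinuousLinearMap.adjoint (J ω) (gradf (u ω))‖ ≤ C)
    (hintG : Integrable (fun ω => ContinuousLinearMap.adjoint (J ω) (gradf (u ω))) μ)
    (hintR : Integrable
      (fun ω => R (w - α • ContinuousLinearMap.adjoint (J ω) (gradf (u ω)))) μ)
    (hintTrue : Integrable (fun ω => ContinuousLinearMap.adjoint (J ω) (gradf (gval ω))) μ)
    (hintSq : Integrable (fun ω => ‖gval ω - u ω‖ ^ 2) μ)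
    (hmean : ∫ ω, ContinuousLinearMap.adjoint (J ω) (gradf (gval ω)) ∂μ = gR w) :
    ∫ ω, R (w - α • ContinuousLinearMap.adjoint (J ω) (gradf (u ω))) ∂μ ≤
      R w - α / 2 * ‖gR w‖ ^ 2 +
        α * Cl ^ 2 * Lf ^ 2 / 2 * ∫ ω, ‖gval ω - u ω‖ ^ 2 ∂μ +
        α ^ 2 * L * C ^ 2 / 2 := by
  have hbias : ‖(∫ ω, ContinuousLinearMap.adjoint (J ω) (gradf (u ω)) ∂μ) - gR w‖ ^ 2 ≤
      Cl ^ 2 * Lf ^ 2 * ∫ ω, ‖gval ω - u ω‖ ^ 2 ∂μ := by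
    rw [← hmean, ← integral_sub hintG hintTrue, ← integral_const_mul]
    refine sq_norm_integral_le_integral_of_sq_norm_le (hintG.sub hintTrue)
      (hintSq.const_mul _) fun ω => ?_
    calc _ ≤ (‖J ω‖ * ‖gradf (u ω) - gradf (gval ω)‖) ^ 2 := by
          gcongr; exact norm_adjoint_apply_sub_le _ _ _
      _ ≤ (Cl * (Lf * ‖gval ω - u ω‖)) ^ 2 := by
          gcongr
          · exact hJ ω
          · rw [norm_sub_rev]; exact hgradf _ _
      _ = _ := by ring
  have hdescent := integral_apply_sub_smul_le_of_smooth hsmooth hα.le hL w hGbound hintG hintR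
  linarith [mul_le_mul_of_nonneg_left hbias (half_pos hα).le]

/-- Descent lemma for the biased compositional stochastic gradient step: if `R` is
`L`-smooth with gradient `gR`, and the stochastic gradient is
`G ω = (J ω)ᵀ (∇f (u ω))` with `E[(J ω)ᵀ (∇f (gval ω))] = gR w` (the true gradient),
`‖J ω‖ ≤ C_l`, `∇f` `L_f`-Lipschitz, and `‖G ω‖ ≤ C`, then the update `w − α • G ω`
satisfies
`E[R(w − α G)] ≤ R(w) − (α/2)‖gR w‖² + (α C_l² L_f²/2) E‖gval − u‖² + α² L C²/2`. -/
theorem biased_sgd_descent_lemma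
    {d m : ℕ} {Ω : Type*} [MeasureSpace Ω] (μ : Measure Ω) [IsProbabilityMeasure μ]
    (R : EuclideanSpace ℝ (Fin d) → ℝ)
    (gR : EuclideanSpace ℝ (Fin d) → EuclideanSpace ℝ (Fin d))
    (gradf : EuclideanSpace ℝ (Fin m) → EuclideanSpace ℝ (Fin m))
    (J : Ω → (EuclideanSpace ℝ (Fin d) →L[ℝ] EuclideanSpace ℝ (Fin m)))
    (gval u : Ω → EuclideanSpace ℝ (Fin m))
    (w : EuclideanSpace ℝ (Fin d))
    (α L Cl Lf C : ℝ)
    (hα : 0 < α) (hL : 0 ≤ L) (hCl : 0 ≤ Cl) (hLf : 0 ≤ Lf) (hC : 0 ≤ C)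
    (hsmooth : ∀ x y, R y ≤ R x + (inner ℝ (gR x) (y - x) : ℝ) + L / 2 * ‖y - x‖ ^ 2)
    (hJ : ∀ ω, ‖J ω‖ ≤ Cl)
    (hgradf : ∀ x y, ‖gradf x - gradf y‖ ≤ Lf * ‖x - y‖)
    (hGbound : ∀ ω, ‖ContinuousLinearMap.adjoint (J ω) (gradf (u ω))‖ ≤ C)
    (hintG : Integrable (fun ω => ContinuousLinearMap.adjoint (J ω) (gradf (u ω))) μ)
    (hintR : Integrable
      (fun ω => R (w - α • ContinuousLinearMap.adjoint (J ω) (gradf (u ω)))) μ)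
    (hintTrue : Integrable (fun ω => ContinuousLinearMap.adjoint (J ω) (gradf (gval ω))) μ)
    (hintSq : Integrable (fun ω => ‖gval ω - u ω‖ ^ 2) μ)
    (hmean : ∫ ω, ContinuousLinearMap.adjoint (J ω) (gradf (gval ω)) ∂μ = gR w) :
    ∫ ω, R (w - α • ContinuousLinearMap.adjoint (J ω) (gradf (u ω))) ∂μ ≤
      R w - α / 2 * ‖gR w‖ ^ 2 +
        α * Cl ^ 2 * Lf ^ 2 / 2 * ∫ ω, ‖gval ω - u ω‖ ^ 2 ∂μ +
        α ^ 2 * L * C ^ 2 / 2 :=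
  biased_sgd_descent_lemma_general μ R gR gradf J gval u w α L Cl Lf C hα hL hCl hsmooth hJ hgradf
    hGbound hintG hintR hintTrue hintSq hmean
end

section
/- For an L-smooth function R bounded below by R*, if (α/2)∑_{t=1}^T ‖∇R(w_t)‖² ≤ R(w_1) − R* + (αC₁/2)·E + α²C₂T for constants C₁, C₂, E ≥ 0, and E ≤ nV/γ + γVT + n²α²C₃T/γ², then choosing α = 1/(n^{2/5}T^{3/5}) and γ = n^{2/5}/T^{2/5} (with T > n) yields (1/T)∑_{t=1}^T E‖∇R(w_t)‖² = O(n^{2/5}/T^{2/5}). -/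
/-!
Substituting `u = n^{1/5}`, `v = T^{1/5}` turns every quantity into a monomial:
`α = u⁻² v⁻³`, `γ = u² v⁻²`, `n = u⁵`, `T = v⁵`. The error bound then reads
`E ≤ V u³ v² + (V + C₃) u² v³ ≤ (2V + C₃) u² v³` (as `u ≤ v`), and the descent inequality gives
`S ≤ 2Δ₁/α + C₁ E + 2 α C₂ T`, where `1/α = u² v³` and `α T = v²/u² ≤ u² v³`.
Hence `S = O(u² v³)`, i.e. `S/T = O(u²/v²) = O(n^{2/5}/T^{2/5})`.
-/

lemma le_of_descent_inequality {α Δ C₁ C₂ S E T : ℝ} (hα : 0 < α)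
    (h : α / 2 * S ≤ Δ + α * C₁ / 2 * E + α ^ 2 * C₂ * T) :
    S ≤ 2 * Δ / α + C₁ * E + 2 * α * C₂ * T := by
  calc S = α / 2 * S * (2 / α) := by field_simp
    _ ≤ (Δ + α * C₁ / 2 * E + α ^ 2 * C₂ * T) * (2 / α) := by gcongr
    _ = 2 * Δ / α + C₁ * E + 2 * α * C₂ * T := by field_simp

lemma Real.rpow_natCast_div_eq_pow {x : ℝ} (hx : 0 ≤ x) (k m : ℕ) :
    x ^ ((k : ℝ) / m) = (x ^ ((1 : ℝ) / m)) ^ k := by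
  rw [← Real.rpow_mul_natCast hx, one_div_mul_eq_div]

section FifthRoots

variable {V C₃ u v : ℝ}

lemma moving_average_error_eq (hu : u ≠ 0) (hv : v ≠ 0) :
    u ^ 5 * V / (u ^ 2 / v ^ 2) + u ^ 2 / v ^ 2 * V * v ^ 5 +
        (u ^ 5) ^ 2 * (1 / (u ^ 2 * v ^ 3)) ^ 2 * C₃ * v ^ 5 / (u ^ 2 / v ^ 2) ^ 2 =
      V * u ^ 3 * v ^ 2 + (V + C₃) * (u ^ 2 * v ^ 3) := by
  field_simp
  ring

lemma moving_average_error_le (hV : 0 ≤ V) (hu : 0 < u) (huv : u ≤ v) :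
    u ^ 5 * V / (u ^ 2 / v ^ 2) + u ^ 2 / v ^ 2 * V * v ^ 5 +
        (u ^ 5) ^ 2 * (1 / (u ^ 2 * v ^ 3)) ^ 2 * C₃ * v ^ 5 / (u ^ 2 / v ^ 2) ^ 2 ≤
      (2 * V + C₃) * (u ^ 2 * v ^ 3) := by
  have hmono : u ^ 3 * v ^ 2 ≤ u ^ 2 * v ^ 3 := by
    have := mul_le_mul_of_nonneg_left huv (by positivity : 0 ≤ u ^ 2 * v ^ 2)
    linear_combination this
  rw [moving_average_error_eq hu.ne' (hu.trans_le huv).ne']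
  linarith [mul_le_mul_of_nonneg_left hmono hV]

lemma step_size_mul_horizon_le (hu : 1 ≤ u) (huv : u ≤ v) :
    1 / (u ^ 2 * v ^ 3) * v ^ 5 ≤ u ^ 2 * v ^ 3 := by
  have hv : 1 ≤ v := hu.trans huv
  rw [div_mul_eq_mul_div, one_mul, div_le_iff₀ (by positivity)]
  calc v ^ 5 = 1 * v ^ 5 * 1 := by ring
    _ ≤ u ^ 4 * v ^ 5 * v := by gcongr; exact one_le_pow₀ hu
    _ = u ^ 2 * v ^ 3 * (u ^ 2 * v ^ 3) := by ring

theorem sum_div_le_of_fifth_roots {Δ₁ C₁ C₂ S E : ℝ}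
    (hV : 0 ≤ V) (hC₁ : 0 ≤ C₁) (hC₂ : 0 ≤ C₂) (hu : 1 ≤ u) (huv : u ≤ v)
    (hdescent : 1 / (u ^ 2 * v ^ 3) / 2 * S ≤
      Δ₁ + 1 / (u ^ 2 * v ^ 3) * C₁ / 2 * E + (1 / (u ^ 2 * v ^ 3)) ^ 2 * C₂ * v ^ 5)
    (herror : E ≤ u ^ 5 * V / (u ^ 2 / v ^ 2) + u ^ 2 / v ^ 2 * V * v ^ 5 +
        (u ^ 5) ^ 2 * (1 / (u ^ 2 * v ^ 3)) ^ 2 * C₃ * v ^ 5 / (u ^ 2 / v ^ 2) ^ 2) :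
    S / v ^ 5 ≤ (2 * Δ₁ + C₁ * (2 * V + C₃) + 2 * C₂) * u ^ 2 / v ^ 2 := by
  have hu0 : 0 < u := one_pos.trans_le hu
  have hv0 : 0 < v := hu0.trans_le huv
  have hS := le_of_descent_inequality (by positivity) hdescent
  have hE := herror.trans (moving_average_error_le (C₃ := C₃) hV hu0 huv)
  have hstep := mul_le_mul_of_nonneg_left (step_size_mul_horizon_le hu huv) hC₂
  have hS' : S ≤ (2 * Δ₁ + C₁ * (2 * V + C₃) + 2 * C₂) * (u ^ 2 * v ^ 3) := by
    rw [div_div_eq_mul_div, div_one] at hS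
    linarith [mul_le_mul_of_nonneg_left hE hC₁]
  rw [div_le_div_iff₀ (by positivity) (by positivity)]
  linarith [mul_le_mul_of_nonneg_right hS' (by positivity : (0 : ℝ) ≤ v ^ 2)]

end FifthRoots

/-- Combination of the descent lemma and the moving-average error bound: if
`(α/2) S ≤ Δ₁ + (α C₁/2) E + α² C₂ T` where `S = ∑_{t=1}^T ‖∇R(w_t)‖²`, and
`E ≤ n V/γ + γ V T + n² α² C₃ T/γ²`, then choosing `α = 1/(n^{2/5} T^{3/5})` and
`γ = n^{2/5}/T^{2/5}` (with `T > n ≥ 1`) yields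
`(1/T) S = O(n^{2/5}/T^{2/5})`, with the constant depending only on
`Δ₁, V, C₁, C₂, C₃`. -/
theorem scraan_convergence_rate (Δ₁ V C₁ C₂ C₃ : ℝ)
    (hΔ : 0 ≤ Δ₁) (hV : 0 ≤ V) (hC₁ : 0 ≤ C₁) (hC₂ : 0 ≤ C₂) (hC₃ : 0 ≤ C₃) :
    ∃ K : ℝ, 0 ≤ K ∧
      ∀ (n T : ℕ), 1 ≤ n → n < T →
        ∀ S E : ℝ, 0 ≤ S → 0 ≤ E →
          (let α : ℝ := 1 / ((n : ℝ) ^ ((2 : ℝ) / 5) * (T : ℝ) ^ ((3 : ℝ) / 5))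
           let γ : ℝ := (n : ℝ) ^ ((2 : ℝ) / 5) / (T : ℝ) ^ ((2 : ℝ) / 5)
           α / 2 * S ≤ Δ₁ + α * C₁ / 2 * E + α ^ 2 * C₂ * T ∧
             E ≤ (n : ℝ) * V / γ + γ * V * T + (n : ℝ) ^ 2 * α ^ 2 * C₃ * T / γ ^ 2) →
          S / T ≤ K * (n : ℝ) ^ ((2 : ℝ) / 5) / (T : ℝ) ^ ((2 : ℝ) / 5) := by
  refine ⟨2 * Δ₁ + C₁ * (2 * V + C₃) + 2 * C₂, by positivity, ?_⟩
  intro n T hn hnT S E _ _ ⟨hdescent, herror⟩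
  have hn1 : (1 : ℝ) ≤ n := by exact_mod_cast hn
  have hnT' : (n : ℝ) ≤ T := by exact_mod_cast hnT.le
  have hn0 : (0 : ℝ) ≤ n := by positivity
  have hT0 : (0 : ℝ) ≤ T := by positivity
  obtain ⟨u, hu⟩ : ∃ u : ℝ, u = (n : ℝ) ^ ((1 : ℝ) / 5) := ⟨_, rfl⟩
  obtain ⟨v, hv⟩ : ∃ v : ℝ, v = (T : ℝ) ^ ((1 : ℝ) / 5) := ⟨_, rfl⟩
  have fifth_root_pow (x : ℝ) (hx : 0 ≤ x) (k : ℕ) := Real.rpow_natCast_div_eq_pow hx k 5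
  have hn2 := fifth_root_pow n hn0 2
  have hn5 := fifth_root_pow n hn0 5
  have hT2 := fifth_root_pow T hT0 2
  have hT3 := fifth_root_pow T hT0 3
  have hT5 := fifth_root_pow T hT0 5
  norm_num [← hu, ← hv] at hn2 hn5 hT2 hT3 hT5
  -- the `rpow` terms go first, since rewriting `n` and `T` would break them
  simp only [hn2, hT2, hT3] at hdescent herror ⊢
  simp only [hn5, hT5] at hdescent herror ⊢
  exact sum_div_le_of_fifth_roots hV hC₁ hC₂ (hu ▸ Real.one_le_rpow hn1 (by norm_num))
    (hu ▸ hv ▸ Real.rpow_le_rpow hn0 hnT' (by norm_num)) hdescent herror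
end
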